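/- Let n ≥ 1. With weight ρ(z, z̄) = (2 / ((2n)^{1/(2n)} π Γ(1/(2n)))) (z z̄)^{n - 1/2} K_{1 - 1/(2n)}((z z̄)^n / n) on ℂ, the monomials z^{2nk} satisfy ∫_ℂ |z^{2nk}|^2 ρ(z, z̄) dA(z) = (2n)^{2k} Γ(k + 1/(2n)) k! / Γ(1/(2n)) for every k ≥ 0. -/

import Mathlib

/-!
In polar coordinates the integral becomes a one-dimensional integral in `u = |z|²`, and the
substitution `x = uⁿ / n` turns it into the Mellin transform of `K_ν`, `ν = 1 - 1/(2n)`, at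
`s = 2k + 1 + 1/(2n)`. That Mellin transform is `2^(s-2) Γ((s+ν)/2) Γ((s-ν)/2)`: integrating
out `x` first (Fubini) gives `Γ(s) ∫₀^∞ cosh(νt) cosh(t)^(-s) dt`; by evenness this is half the
integral of `e^(νt) cosh(t)^(-s)` over `ℝ`, which the logistic substitution `y = σ(2t)` turns
into `2^(s-1) B((s+ν)/2, (s-ν)/2)`.
-/

open Real MeasureTheory Complex

/-- The modified Bessel function of the second kind, via its integral representation. -/
noncomputable def besselK (ν : ℝ) (x : ℝ) : ℝ :=
  ∫ t in Set.Ioi (0 : ℝ), Real.exp (-x * Real.cosh t) * Real.cosh (ν * t)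

/-- The weight `ρ₁` of the first coupled SUSY Segal-Bargmann space. -/
noncomputable def rho1 (n : ℕ) (z : ℂ) : ℝ :=
  (2 / ((2 * n : ℝ) ^ ((1 : ℝ) / (2 * n)) * Real.pi * Real.Gamma (1 / (2 * n)))) *
    (Complex.normSq z) ^ ((n : ℝ) - 1 / 2) *
    besselK (1 - 1 / (2 * n)) ((Complex.normSq z) ^ (n : ℕ) / n)

open Set

lemma integral_rpow_mul_one_sub_rpow {p q : ℝ} (hp : 0 < p) (hq : 0 < q) :
    ∫ x in Ioo (0 : ℝ) 1, x ^ (p - 1) * (1 - x) ^ (q - 1) = ProbabilityTheory.beta p q := by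
  have hB := ProbabilityTheory.beta_pos hp hq
  have h := ProbabilityTheory.lintegral_betaPDF_eq_one hp hq
  rw [ProbabilityTheory.lintegral_betaPDF, ← ENNReal.toReal_eq_one_iff,
    ← integral_eq_lintegral_of_nonneg_ae] at h
  · simp_rw [mul_assoc, integral_const_mul] at h
    field_simp at h
    exact h
  · refine ae_restrict_of_forall_mem measurableSet_Ioo fun x hx => ?_
    have := hx.1; have := hx.2
    positivity
  · exact Measurable.aestronglyMeasurable (by fun_prop)

lemma integrableOn_rpow_mul_one_sub_rpow {p q : ℝ} (hp : 0 < p) (hq : 0 < q) :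
    IntegrableOn (fun x : ℝ => x ^ (p - 1) * (1 - x) ^ (q - 1)) (Ioo 0 1) :=
  .of_integral_ne_zero <| by
    rw [integral_rpow_mul_one_sub_rpow hp hq]; exact (ProbabilityTheory.beta_pos hp hq).ne'

lemma sigmoid_two_mul (t : ℝ) : sigmoid (2 * t) = rexp t / (2 * Real.cosh t) := by
  have h : rexp (-t) * rexp t = 1 := by rw [← Real.exp_add, neg_add_cancel, Real.exp_zero]
  rw [sigmoid_def, Real.cosh_eq, show -(2 * t) = -t + -t by ring, Real.exp_add]
  have := Real.exp_pos t
  field_simp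
  linear_combination (-rexp (-t)) * h

lemma one_sub_sigmoid_two_mul (t : ℝ) : 1 - sigmoid (2 * t) = rexp (-t) / (2 * Real.cosh t) := by
  rw [← sigmoid_neg, ← mul_neg, sigmoid_two_mul, Real.cosh_neg]

lemma abs_deriv_smul_beta_integrand_sigmoid (p q t : ℝ) :
    |2 * (sigmoid (2 * t) * (1 - sigmoid (2 * t)))| •
        (sigmoid (2 * t) ^ (q - 1) * (1 - sigmoid (2 * t)) ^ (p - 1))
      = 2 ^ (1 - (q + p)) * (rexp ((q - p) * t) * Real.cosh t ^ (-(q + p))) := by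
  have hc := Real.cosh_pos t
  have hσ := sigmoid_pos (2 * t)
  have hσ' : 0 < 1 - sigmoid (2 * t) := sub_pos.mpr (sigmoid_lt_one _)
  rw [smul_eq_mul, abs_of_pos (by positivity), rpow_sub_one hσ.ne', rpow_sub_one hσ'.ne',
    one_sub_sigmoid_two_mul, sigmoid_two_mul, div_rpow (Real.exp_pos _).le (by positivity),
    div_rpow (Real.exp_pos _).le (by positivity), ← Real.exp_mul, ← Real.exp_mul,
    rpow_sub two_pos, rpow_one, rpow_neg hc.le, mul_rpow two_pos.le hc.le,
    mul_rpow two_pos.le hc.le, show (q - p) * t = t * q + -t * p by ring, Real.exp_add,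
    rpow_add two_pos, rpow_add hc]
  have := Real.exp_pos (-t)
  have := Real.exp_pos t
  field_simp

lemma hasDerivAt_sigmoid_two_mul (t : ℝ) :
    HasDerivAt (fun t => sigmoid (2 * t)) (2 * (sigmoid (2 * t) * (1 - sigmoid (2 * t)))) t := by
  refine ((hasDerivAt_sigmoid (2 * t)).comp t ((hasDerivAt_id t).const_mul 2)).congr_deriv ?_
  ring

lemma image_sigmoid_two_mul : (fun t => sigmoid (2 * t)) '' univ = Ioo 0 1 := by
  rw [image_univ, ← range_sigmoid]
  exact (mul_left_surjective₀ two_ne_zero).range_comp sigmoid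

lemma injective_sigmoid_two_mul : Function.Injective fun t : ℝ => sigmoid (2 * t) :=
  sigmoid_injective.comp (mul_right_injective₀ two_ne_zero)

lemma integrable_exp_mul_cosh_rpow_neg {p q : ℝ} (hp : 0 < p) (hq : 0 < q) :
    Integrable fun t => rexp ((q - p) * t) * Real.cosh t ^ (-(q + p)) := by
  have h := (integrableOn_image_iff_integrableOn_abs_deriv_smul MeasurableSet.univ
    (fun t _ => (hasDerivAt_sigmoid_two_mul t).hasDerivWithinAt)
    injective_sigmoid_two_mul.injOn fun y => y ^ (q - 1) * (1 - y) ^ (p - 1)).mp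
  rw [image_sigmoid_two_mul] at h
  simp_rw [abs_deriv_smul_beta_integrand_sigmoid, integrableOn_univ] at h
  exact (integrable_const_mul_iff (isUnit_iff_ne_zero.mpr (by positivity)) _).mp
    (h (integrableOn_rpow_mul_one_sub_rpow hq hp))

lemma integral_exp_mul_cosh_rpow_neg {p q : ℝ} :
    ∫ t, rexp ((q - p) * t) * Real.cosh t ^ (-(q + p))
      = 2 ^ (q + p - 1) * ∫ y in Ioo (0 : ℝ) 1, y ^ (q - 1) * (1 - y) ^ (p - 1) := by
  rw [← image_sigmoid_two_mul, integral_image_eq_integral_abs_deriv_smul MeasurableSet.univ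
    (fun t _ => (hasDerivAt_sigmoid_two_mul t).hasDerivWithinAt)
    injective_sigmoid_two_mul.injOn]
  simp_rw [abs_deriv_smul_beta_integrand_sigmoid, setIntegral_univ, integral_const_mul,
    ← mul_assoc, ← rpow_add two_pos]
  norm_num

lemma integral_Ioi_add_comp_neg {E : Type*} [NormedAddCommGroup E] [NormedSpace ℝ E]
    {g : ℝ → E} (hg : Integrable g) : ∫ t in Ioi 0, (g t + g (-t)) = ∫ t, g t := by
  rw [integral_add hg.integrableOn hg.comp_neg.integrableOn, integral_comp_neg_Ioi, neg_zero,
    add_comm, intervalIntegral.integral_Iic_add_Ioi hg.integrableOn hg.integrableOn]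

lemma cosh_mul_eq_half_add_comp_neg (ν s t : ℝ) :
    Real.cosh (ν * t) * Real.cosh t ^ (-s)
      = (rexp (ν * t) * Real.cosh t ^ (-s) + rexp (ν * -t) * Real.cosh (-t) ^ (-s)) / 2 := by
  rw [Real.cosh_neg, Real.cosh_eq, mul_neg]
  ring

lemma integrableOn_cosh_mul_cosh_rpow_neg {ν s : ℝ} (h : |ν| < s) :
    IntegrableOn (fun t => Real.cosh (ν * t) * Real.cosh t ^ (-s)) (Ioi 0) := by
  obtain ⟨hν₁, hν₂⟩ := abs_lt.mp h
  have hg := integrable_exp_mul_cosh_rpow_neg (p := (s - ν) / 2) (q := (s + ν) / 2)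
    (by linarith) (by linarith)
  simp_rw [show (s + ν) / 2 - (s - ν) / 2 = ν by ring,
    show (s + ν) / 2 + (s - ν) / 2 = s by ring] at hg
  simp_rw [cosh_mul_eq_half_add_comp_neg ν s]
  exact ((hg.add hg.comp_neg).div_const 2).integrableOn

lemma integral_cosh_mul_cosh_rpow_neg {ν s : ℝ} (h : |ν| < s) :
    ∫ t in Ioi 0, Real.cosh (ν * t) * Real.cosh t ^ (-s)
      = 2 ^ (s - 2) * ProbabilityTheory.beta ((s + ν) / 2) ((s - ν) / 2) := by
  obtain ⟨hν₁, hν₂⟩ := abs_lt.mp h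
  have hp : 0 < (s - ν) / 2 := by linarith
  have hq : 0 < (s + ν) / 2 := by linarith
  have hg := integrable_exp_mul_cosh_rpow_neg hp hq
  have hI := integral_exp_mul_cosh_rpow_neg (p := (s - ν) / 2) (q := (s + ν) / 2)
  simp_rw [show (s + ν) / 2 - (s - ν) / 2 = ν by ring,
    show (s + ν) / 2 + (s - ν) / 2 = s by ring] at hg hI
  simp_rw [cosh_mul_eq_half_add_comp_neg ν s, integral_div,
    integral_Ioi_add_comp_neg hg, hI, integral_rpow_mul_one_sub_rpow hq hp,
    show s - 2 = s - 1 - 1 by ring, rpow_sub_one two_ne_zero]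
  ring

lemma integral_rpow_mul_besselK {ν s : ℝ} (h : |ν| < s) :
    ∫ x in Ioi 0, x ^ (s - 1) * besselK ν x
      = 2 ^ (s - 2) * Real.Gamma ((s + ν) / 2) * Real.Gamma ((s - ν) / 2) := by
  obtain ⟨hν₁, hν₂⟩ := abs_lt.mp h
  have hs : 0 < s := by linarith
  set F : ℝ → ℝ → ℝ :=
    fun t x => x ^ (s - 1) * (rexp (-x * Real.cosh t) * Real.cosh (ν * t))
  have inner : ∀ t, ∫ x in Ioi 0, F t x
      = Real.Gamma s * (Real.cosh (ν * t) * Real.cosh t ^ (-s)) := fun t => by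
    have hc := Real.cosh_pos t
    simp_rw [F, ← mul_assoc, integral_mul_const, neg_mul, mul_comm _ (Real.cosh t),
      integral_rpow_mul_exp_neg_mul_Ioi hs hc, one_div, inv_rpow hc.le, ← rpow_neg hc.le]
    ring
  have inner_integrable : ∀ t, IntegrableOn (F t) (Ioi 0) := fun t =>
    .of_integral_ne_zero <| by
      rw [inner]; have := Real.Gamma_pos_of_pos hs; have := Real.cosh_pos t; positivity
  have hF : Integrable (Function.uncurry F)
      ((volume.restrict (Ioi 0)).prod (volume.restrict (Ioi 0))) := by
    refine (integrable_prod_iff (Measurable.aestronglyMeasurable (by fun_prop))).mpr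
      ⟨.of_forall inner_integrable, ?_⟩
    have norm_eq : ∀ t, ∫ x in Ioi 0, ‖F t x‖ = ∫ x in Ioi 0, F t x := fun t =>
      setIntegral_congr_fun measurableSet_Ioi fun x (hx : 0 < x) =>
        norm_of_nonneg (by have := Real.cosh_pos (ν * t); positivity)
    simp_rw [Function.uncurry_apply_pair, norm_eq, inner]
    exact (integrableOn_cosh_mul_cosh_rpow_neg h).const_mul _
  calc ∫ x in Ioi 0, x ^ (s - 1) * besselK ν x
      = ∫ x in Ioi 0, ∫ t in Ioi 0, F t x := by
        simp_rw [F, besselK, ← integral_const_mul]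
    _ = ∫ t in Ioi 0, ∫ x in Ioi 0, F t x := (integral_integral_swap hF).symm
    _ = _ := by
        simp_rw [inner, integral_const_mul, integral_cosh_mul_cosh_rpow_neg h,
          ProbabilityTheory.beta, show (s + ν) / 2 + (s - ν) / 2 = s by ring]
        field_simp [(Real.Gamma_pos_of_pos hs).ne']

lemma integral_comp_normSq {E : Type*} [NormedAddCommGroup E] [NormedSpace ℝ E]
    (f : ℝ → E) :
    ∫ z : ℂ, f (normSq z) = π • ∫ u in Ioi 0, f u := by
  have hball : volume.real (Metric.ball (0 : ℂ) 1) = π := by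
    simp [Measure.real, Complex.volume_ball]
  simp_rw [normSq_eq_norm_sq]
  rw [integral_fun_norm_addHaar volume fun r => f (r ^ 2), hball, Complex.finrank_real_complex,
    ← integral_comp_rpow_Ioi f two_ne_zero, smul_comm, ← Nat.cast_smul_eq_nsmul ℝ, ← integral_smul]
  congr 1
  refine setIntegral_congr_fun measurableSet_Ioi fun r _ => ?_
  norm_num [smul_smul, rpow_two]

lemma integral_rpow_mul_comp_rpow_div {a : ℝ} (ha : 0 < a) (s : ℝ) (g : ℝ → ℝ) :
    ∫ u in Ioi 0, u ^ (a * s - 1) * g (u ^ a / a)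
      = a ^ (s - 1) * ∫ x in Ioi 0, x ^ (s - 1) * g x := by
  set h : ℝ → ℝ := fun x => x ^ (s - 1) * g x
  have hscale : ∫ y in Ioi 0, h (y / a) = a * ∫ x in Ioi 0, h x := by
    simpa [div_eq_inv_mul] using integral_comp_mul_left_Ioi h 0 (inv_pos.mpr ha)
  calc ∫ u in Ioi 0, u ^ (a * s - 1) * g (u ^ a / a)
      = ∫ u in Ioi 0, a ^ (s - 2) * ((|a| * u ^ (a - 1)) • h (u ^ a / a)) := by
        refine setIntegral_congr_fun measurableSet_Ioi fun u (hu : 0 < u) => ?_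
        have hsplit : a * s - 1 = (a - 1) + a * (s - 1) := by ring
        simp only [h]
        rw [smul_eq_mul, abs_of_pos ha, div_rpow (by positivity) ha.le, ← rpow_mul hu.le, hsplit,
          rpow_add hu, show s - 2 = s - 1 - 1 by ring, rpow_sub_one ha.ne']
        have := rpow_pos_of_pos ha (s - 1)
        field_simp
    _ = a ^ (s - 2) * (a * ∫ x in Ioi 0, h x) := by
        rw [integral_const_mul, integral_comp_rpow_Ioi (fun y => h (y / a)) ha.ne', hscale]
    _ = a ^ (s - 1) * ∫ x in Ioi 0, h x := by
        rw [show s - 2 = s - 1 - 1 by ring, rpow_sub_one ha.ne']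
        field_simp

lemma integral_pow_mul_rpow_mul_besselK_pow_div {n : ℕ} (hn : 1 ≤ n) (k : ℕ) :
    ∫ u in Ioi 0, u ^ (2 * n * k) * u ^ ((n : ℝ) - 1 / 2) * besselK (1 - 1 / (2 * n)) (u ^ n / n)
      = (2 * n) ^ (2 * k) * (2 * n : ℝ) ^ ((1 : ℝ) / (2 * n)) / 2 * k.factorial
          * Real.Gamma (k + 1 / (2 * n)) := by
  have hn0 : (0 : ℝ) < n := by exact_mod_cast hn
  set ν : ℝ := 1 - 1 / (2 * n)
  set s : ℝ := 2 * k + 1 + 1 / (2 * n)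
  have hνs : |ν| < s := by
    have : 1 / (2 * (n : ℝ)) ≤ 1 := by
      rw [div_le_one (by positivity)]; exact_mod_cast (by omega : 1 ≤ 2 * n)
    rw [abs_of_nonneg (by linarith)]
    have : 0 < 1 / (2 * (n : ℝ)) := by positivity
    linarith [(k.cast_nonneg : (0 : ℝ) ≤ k)]
  have hintegrand : ∀ u ∈ Ioi (0 : ℝ),
      u ^ (2 * n * k) * u ^ ((n : ℝ) - 1 / 2) * besselK ν (u ^ n / n)
        = u ^ (n * s - 1) * besselK ν (u ^ (n : ℝ) / n) := fun u (hu : 0 < u) => by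
    rw [rpow_natCast, ← rpow_natCast, ← rpow_add hu]
    congr 2
    simp only [s]
    push_cast
    field_simp
    ring
  have hpowers : (n : ℝ) ^ (s - 1) * 2 ^ (s - 2)
      = (2 * n) ^ (2 * k) * (2 * n : ℝ) ^ ((1 : ℝ) / (2 * n)) / 2 := by
    rw [show s - 2 = s - 1 - 1 by ring, rpow_sub_one two_ne_zero, ← mul_div_assoc,
      ← mul_rpow hn0.le zero_le_two, show s - 1 = ((2 * k : ℕ) : ℝ) + 1 / (2 * n) by
        push_cast; ring, rpow_add (by positivity), rpow_natCast, mul_comm (n : ℝ)]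
  rw [setIntegral_congr_fun measurableSet_Ioi hintegrand, integral_rpow_mul_comp_rpow_div hn0,
    integral_rpow_mul_besselK hνs, show (s + ν) / 2 = k + 1 by ring,
    show (s - ν) / 2 = k + 1 / (2 * n) by ring, Real.Gamma_nat_eq_factorial, ← hpowers]
  ring

/-- Norms of the monomials `z^{2nk}` in the first coupled SUSY Segal-Bargmann space:
`∫_ℂ |z^{2nk}|² ρ₁(z,z̄) dA(z) = (2n)^{2k} Γ(k + 1/(2n)) k! / Γ(1/(2n))`. -/
theorem stmt15 (n : ℕ) (hn : 1 ≤ n) (k : ℕ) :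
    ∫ z : ℂ, ‖z ^ (2 * n * k)‖ ^ 2 * rho1 n z
      = (2 * n : ℝ) ^ (2 * k) * Real.Gamma ((k : ℝ) + 1 / (2 * n)) * (k.factorial : ℝ)
          / Real.Gamma (1 / (2 * n)) := by
  set C : ℝ := 2 / ((2 * n : ℝ) ^ ((1 : ℝ) / (2 * n)) * π * Real.Gamma (1 / (2 * n)))
  have hrho : ∀ z, rho1 n z
      = C * normSq z ^ ((n : ℝ) - 1 / 2) * besselK (1 - 1 / (2 * n)) (normSq z ^ n / n) :=
    fun z => rfl
  have hintegrand : ∀ z : ℂ, ‖z ^ (2 * n * k)‖ ^ 2 * rho1 n z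
      = C * (normSq z ^ (2 * n * k) * normSq z ^ ((n : ℝ) - 1 / 2)
          * besselK (1 - 1 / (2 * n)) (normSq z ^ n / n)) := fun z => by
    rw [hrho, norm_pow, ← pow_mul, mul_comm _ 2, pow_mul, ← normSq_eq_norm_sq]
    ring
  simp_rw [hintegrand]
  rw [integral_const_mul, integral_comp_normSq (fun u => u ^ (2 * n * k) * u ^ ((n : ℝ) - 1 / 2)
      * besselK (1 - 1 / (2 * n)) (u ^ n / n)), smul_eq_mul,
    integral_pow_mul_rpow_mul_besselK_pow_div hn]
  have : 0 < Real.Gamma (1 / (2 * n)) := Real.Gamma_pos_of_pos (by positivity)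
  have : (0 : ℝ) < (2 * n) ^ ((1 : ℝ) / (2 * n)) := by positivity
  simp only [C]
  field_simp
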